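/- arXiv:1706.10099 — 2 statements merged into one kernel-verified Lean document; each statement's English description precedes it below -/
import Mathlib

section
/- Let ν, γ, Λ, ξ, L > 0. Suppose u : ℝ × ℝ³ → ℝ³, φ : ℝ × ℝ³ → ℝ and p : ℝ × ℝ³ → ℝ are smooth, L-periodic in each spatial coordinate, with div u(t,·) = 0, f : ℝ³ → ℝ³ is smooth and L-periodic, and, with μ = Λ(−Δφ + ξ⁻²(φ³ − φ)), the CHNS equations ∂ₜφ + u·∇φ = γΔμ and ∂ₜu + (u·∇)u = νΔu − φ∇μ − ∇p + f hold pointwise. Define E(t) = ∫_V [ ½Λ|∇φ|² + (Λ/(4ξ²))(φ² − 1)² + ½|u|² ] dV. Then for every t, dE/dt = −∫_V ( ν|∇u|² + γ|∇μ|² ) dV + ∫_V u·f dV. In particular, if f = 0 then E is nonincreasing. -/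
open MeasureTheory Set

noncomputable section

abbrev Sp := Fin 3 → ℝ

def e3 (i : Fin 3) : Sp := Pi.single i 1

def box (L : ℝ) : Set Sp := Set.univ.pi fun _ => Set.Icc 0 L

def Per {α : Type*} (L : ℝ) (f : Sp → α) : Prop :=
  ∀ (x : Sp) (i : Fin 3), f (x + L • e3 i) = f x

def pd (i : Fin 3) (f : Sp → ℝ) (x : Sp) : ℝ := fderiv ℝ f x (e3 i)

def Dn (n : ℕ) (f : Sp → ℝ) (x : Sp) (m : Fin n → Fin 3) : ℝ :=
  iteratedFDeriv ℝ n f x fun k => e3 (m k)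

def gradSq (n : ℕ) (f : Sp → ℝ) (x : Sp) : ℝ :=
  ∑ m : Fin n → Fin 3, (Dn n f x m) ^ 2

def gradSqV (n : ℕ) (u : Sp → Sp) (x : Sp) : ℝ :=
  ∑ i : Fin 3, gradSq n (fun y => u y i) x

def Pnorm (L : ℝ) (n : ℕ) (f : Sp → ℝ) : ℝ := ∫ x in box L, gradSq n f x

def Hnorm (L : ℝ) (n : ℕ) (u : Sp → Sp) : ℝ := ∫ x in box L, gradSqV n u x

def enorm3 (v : Sp) : ℝ := Real.sqrt (∑ i, v i ^ 2)

def supNorm (L : ℝ) (g : Sp → ℝ) : ℝ := sSup ((fun x => |g x|) '' box L)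

def supNormV (L : ℝ) (u : Sp → Sp) : ℝ := sSup ((fun x => enorm3 (u x)) '' box L)

def div3 (u : Sp → Sp) (x : Sp) : ℝ := ∑ i, pd i (fun y => u y i) x

def grad3 (f : Sp → ℝ) (x : Sp) : Sp := fun i => pd i f x

def lap3 (f : Sp → ℝ) (x : Sp) : ℝ := ∑ i, pd i (pd i f) x

def advect (u : Sp → Sp) (f : Sp → ℝ) (x : Sp) : ℝ := ∑ j, u x j * pd j f x

def curl3 (u : Sp → Sp) (x : Sp) : Sp :=
  ![pd 1 (fun y => u y 2) x - pd 2 (fun y => u y 1) x,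
    pd 2 (fun y => u y 0) x - pd 0 (fun y => u y 2) x,
    pd 0 (fun y => u y 1) x - pd 1 (fun y => u y 0) x]

def cross3 (a b : Sp) : Sp :=
  ![a 1 * b 2 - a 2 * b 1, a 2 * b 0 - a 0 * b 2, a 0 * b 1 - a 1 * b 0]

def tensorInner (n : ℕ) (f g : Sp → ℝ) (x : Sp) : ℝ :=
  ∑ m : Fin n → Fin 3, Dn n f x m * Dn n g x m


-- prelim
lemma box_eq_Icc (L : ℝ) : box L = Set.Icc (0 : Sp) (fun _ => L) := by
  ext x; simp [box, Set.mem_pi, Set.mem_Icc, Pi.le_def, funext_iff]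

lemma hasDerivAt_slice {F : ℝ × Sp → ℝ} {t : ℝ} {x : Sp}
    (hF : DifferentiableAt ℝ F (t, x)) :
    HasDerivAt (fun s => F (s, x)) (fderiv ℝ F (t, x) (1, 0)) t := by
  have h1 : HasFDerivAt (fun s : ℝ => (s, x))
      ((ContinuousLinearMap.id ℝ ℝ).prod 0) t :=
    (hasFDerivAt_id t).prodMk (hasFDerivAt_const x t)
  have h2 := (hF.hasFDerivAt.comp t h1).hasDerivAt
  exact h2

lemma pd_slice {F : ℝ × Sp → ℝ} {t : ℝ} {x : Sp} (i : Fin 3)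
    (hF : DifferentiableAt ℝ F (t, x)) :
    pd i (fun y => F (t, y)) x = fderiv ℝ F (t, x) (0, e3 i) := by
  have h1 : HasFDerivAt (fun y : Sp => (t, y))
      ((0 : Sp →L[ℝ] ℝ).prod (ContinuousLinearMap.id ℝ Sp)) x :=
    (hasFDerivAt_const t x).prodMk (hasFDerivAt_id x)
  have h2 := (hF.hasFDerivAt.comp x h1).fderiv
  rw [pd, show (fun y => F (t, y)) = F ∘ Prod.mk t from rfl, h2]; simp

lemma contDiff_pd {f : Sp → ℝ} (hf : ContDiff ℝ (⊤ : ℕ∞) f) (i : Fin 3) :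
    ContDiff ℝ (⊤ : ℕ∞) (pd i f) := by
  exact (hf.fderiv_right (m := (⊤ : ℕ∞)) le_rfl).clm_apply contDiff_const

lemma pd_add {f g : Sp → ℝ} {x : Sp} (i : Fin 3)
    (hf : DifferentiableAt ℝ f x) (hg : DifferentiableAt ℝ g x) :
    pd i (fun y => f y + g y) x = pd i f x + pd i g x := by
  simp [pd, fderiv_fun_add hf hg]

lemma pd_sub {f g : Sp → ℝ} {x : Sp} (i : Fin 3)
    (hf : DifferentiableAt ℝ f x) (hg : DifferentiableAt ℝ g x) :
    pd i (fun y => f y - g y) x = pd i f x - pd i g x := by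
  simp [pd, fderiv_fun_sub hf hg]

lemma pd_mul {f g : Sp → ℝ} {x : Sp} (i : Fin 3)
    (hf : DifferentiableAt ℝ f x) (hg : DifferentiableAt ℝ g x) :
    pd i (fun y => f y * g y) x = pd i f x * g x + f x * pd i g x := by
  simp [pd, fderiv_fun_mul hf hg]; ring

lemma pd_const_mul {f : Sp → ℝ} {x : Sp} (i : Fin 3) (c : ℝ)
    (hf : DifferentiableAt ℝ f x) :
    pd i (fun y => c * f y) x = c * pd i f x := by
  simp [pd, fderiv_const_mul hf]

lemma Per.pd {g : Sp → ℝ} {L : ℝ} (hg : Differentiable ℝ g) (hper : Per L g) (i : Fin 3) :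
    Per L (pd i g) := by
  intro x j
  have hτ : HasFDerivAt (fun y : Sp => y + L • e3 j) (ContinuousLinearMap.id ℝ Sp) x := by
    have h := hasFDerivAt_id (𝕜 := ℝ) (x : Sp)
    simpa using h.add_const (L • e3 j)
  have h2 : HasFDerivAt (fun y => g (y + L • e3 j))
      ((fderiv ℝ g (x + L • e3 j)).comp (ContinuousLinearMap.id ℝ Sp)) x :=
    (hg (x + L • e3 j)).hasFDerivAt.comp x hτ
  have h3 : (fun y => g (y + L • e3 j)) = g := funext fun y => hper y j
  rw [h3] at h2
  have h4 := h2.fderiv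
  simp only [ContinuousLinearMap.comp_id] at h4
  show fderiv ℝ g (x + L • e3 j) (e3 i) = fderiv ℝ g x (e3 i)
  rw [h4]

lemma insertNth_top_eq {L : ℝ} (i : Fin 3) (y : Fin 2 → ℝ) :
    (Fin.insertNth i L y : Sp) = Fin.insertNth i 0 y + L • e3 i := by
  funext k
  rcases eq_or_ne k i with rfl | hk
  · simp [e3]
  · obtain ⟨k', rfl⟩ := Fin.exists_succAbove_eq hk
    simp [e3, Pi.single_eq_of_ne (Fin.succAbove_ne i k')]

lemma integral_pd_eq_zero {L : ℝ} (hL : 0 < L) {g : Sp → ℝ} (hg : ContDiff ℝ (⊤ : ℕ∞) g)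
    (hper : Per L g) (i : Fin 3) : ∫ x in box L, pd i g x = 0 := by
  classical
  set a : Sp := 0 with ha
  set b : Sp := fun _ => L with hb
  have hle : a ≤ b := fun _ => hL.le
  have hdiveq : ∀ x : Sp,
      (∑ j, (ContinuousLinearMap.pi fun j' : Fin 3 =>
        if j' = i then fderiv ℝ g x else (0 : Sp →L[ℝ] ℝ)) (Pi.single j 1) j) = pd i g x := by
    intro x
    rw [Finset.sum_eq_single i]
    · simp [pd, e3]
    · intro j _ hj
      simp [hj]
    · simp
  have Hc : ContinuousOn (fun x (j : Fin 3) => if j = i then g x else 0) (Set.Icc a b) := by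
    refine (continuous_pi fun j => ?_).continuousOn
    split_ifs
    · exact hg.continuous
    · exact continuous_const
  have Hd : ∀ x ∈ (Set.pi univ fun i => Ioo (a i) (b i)) \ (∅ : Set Sp),
      HasFDerivAt (fun x (j : Fin 3) => if j = i then g x else 0)
        (ContinuousLinearMap.pi fun j : Fin 3 =>
          if j = i then fderiv ℝ g x else (0 : Sp →L[ℝ] ℝ)) x := by
    intro x _
    refine hasFDerivAt_pi.2 fun j => ?_
    split_ifs with h
    · exact (hg.differentiable (by simp) x).hasFDerivAt
    · exact hasFDerivAt_const 0 x
  have Hi : IntegrableOn (fun x => ∑ j, (ContinuousLinearMap.pi fun j' : Fin 3 =>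
      if j' = i then fderiv ℝ g x else (0 : Sp →L[ℝ] ℝ)) (Pi.single j 1) j) (Set.Icc a b) := by
    rw [funext hdiveq]
    exact (contDiff_pd hg i).continuous.integrableOn_Icc
  have key := MeasureTheory.integral_divergence_of_hasFDerivAt_off_countable (n := 2) a b hle
    (fun x (j : Fin 3) => if j = i then g x else 0)
    (fun x => ContinuousLinearMap.pi fun j : Fin 3 =>
      if j = i then fderiv ℝ g x else (0 : Sp →L[ℝ] ℝ))
    ∅ Set.countable_empty Hc Hd Hi
  rw [box_eq_Icc]
  have hL2 : (∫ x in Set.Icc a b, pd i g x)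
      = ∫ x in Set.Icc a b, ∑ j, (ContinuousLinearMap.pi fun j' : Fin 3 =>
        if j' = i then fderiv ℝ g x else (0 : Sp →L[ℝ] ℝ)) (Pi.single j 1) j := by
    refine setIntegral_congr_fun ?_ fun x _ => (hdiveq x).symm
    exact measurableSet_Icc
  rw [hL2, key]
  rw [Finset.sum_eq_single i]
  · have hfront : ∀ y : Fin 2 → ℝ,
        (if (i : Fin 3) = i then g (Fin.insertNth i (b i) y) else 0)
          = (if (i : Fin 3) = i then g (Fin.insertNth i (a i) y) else 0) := by
      intro y
      simp only [if_pos rfl, ha, hb]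
      rw [show Fin.insertNth i L y = Fin.insertNth i (0:ℝ) y + L • e3 i from insertNth_top_eq i y]
      exact hper _ i
    rw [show (∫ y in Set.Icc (a ∘ i.succAbove) (b ∘ i.succAbove),
        (fun x (j : Fin 3) => if j = i then g x else 0) (Fin.insertNth i (b i) y) i)
      = ∫ y in Set.Icc (a ∘ i.succAbove) (b ∘ i.succAbove),
        (fun x (j : Fin 3) => if j = i then g x else 0) (Fin.insertNth i (a i) y) i from
      integral_congr_ae (Filter.Eventually.of_forall fun y => hfront y)]
    ring
  · intro j _ hj
    simp [if_neg hj]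
  · simp

lemma isCompact_box (L : ℝ) : IsCompact (box L) := by
  rw [box_eq_Icc]; exact isCompact_Icc

lemma measurableSet_box (L : ℝ) : MeasurableSet (box L) := by
  rw [box_eq_Icc]; exact measurableSet_Icc

lemma hasDerivAt_integral_box (L : ℝ) (F : ℝ × Sp → ℝ) (hF : ContDiff ℝ (⊤ : ℕ∞) F) (t : ℝ) :
    HasDerivAt (fun s => ∫ x in box L, F (s, x))
      (∫ x in box L, fderiv ℝ F (t, x) (1, 0)) t := by
  have hG : Continuous fun q : ℝ × Sp => fderiv ℝ F q (1, 0) :=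
    ((hF.fderiv_right (m := (⊤ : ℕ∞)) le_rfl).clm_apply contDiff_const).continuous
  have hK : IsCompact ((Set.Icc (t - 1) (t + 1)) ×ˢ box L) :=
    isCompact_Icc.prod (isCompact_box L)
  obtain ⟨C, hC⟩ : ∃ C, ∀ q ∈ (Set.Icc (t - 1) (t + 1)) ×ˢ box L,
      ‖fderiv ℝ F q (1, 0)‖ ≤ C :=
    hK.exists_bound_of_continuousOn hG.continuousOn
  have hmeas_box := measurableSet_box L
  have hfin : volume (box L) < ⊤ := (isCompact_box L).measure_lt_top
  have key := hasDerivAt_integral_of_dominated_loc_of_deriv_le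
    (μ := volume.restrict (box L)) (F := fun s x => F (s, x))
    (F' := fun s x => fderiv ℝ F (s, x) (1, 0)) (x₀ := t) (bound := fun _ => C)
    (Metric.ball_mem_nhds t one_pos)
    (Filter.Eventually.of_forall fun s =>
      (hF.continuous.comp (continuous_const.prodMk continuous_id)).aestronglyMeasurable)
    (((hF.continuous.comp (continuous_const.prodMk continuous_id)).continuousOn.integrableOn_compact
      (μ := volume) (isCompact_box L) :))
    ((hG.comp (continuous_const.prodMk continuous_id)).aestronglyMeasurable)
    ?_ (integrableOn_const hfin.ne)
    ?_
  · exact key.2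
  · filter_upwards [ae_restrict_mem hmeas_box] with x hx
    intro s hs
    refine hC (s, x) ⟨?_, hx⟩
    have : |s - t| < 1 := by simpa [Metric.mem_ball, Real.dist_eq] using hs
    constructor <;> [linarith [abs_lt.1 this |>.1]; linarith [abs_lt.1 this |>.2]]
  · refine Filter.Eventually.of_forall fun x => fun s _ => ?_
    exact hasDerivAt_slice (hF.differentiable (by simp) _)

lemma hasDerivAt_pd_slice (Φ : ℝ × Sp → ℝ) (hΦ : ContDiff ℝ (⊤ : ℕ∞) Φ) (t : ℝ) (x : Sp) (i : Fin 3) :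
    HasDerivAt (fun s => fderiv ℝ Φ (s, x) (0, e3 i))
      (pd i (fun y => fderiv ℝ Φ (t, y) (1, 0)) x) t := by
  have hfd : ContDiff ℝ (⊤ : ℕ∞) (fderiv ℝ Φ) := hΦ.fderiv_right (m := (⊤ : ℕ∞)) le_rfl
  have hG : ContDiff ℝ (⊤ : ℕ∞) (fun q : ℝ × Sp => fderiv ℝ Φ q (0, e3 i)) :=
    hfd.clm_apply contDiff_const
  have hH : ContDiff ℝ (⊤ : ℕ∞) (fun q : ℝ × Sp => fderiv ℝ Φ q (1, 0)) :=
    hfd.clm_apply contDiff_const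
  have hc : DifferentiableAt ℝ (fderiv ℝ Φ) (t, x) := hfd.differentiable (by simp) _
  have h1 := hasDerivAt_slice (F := fun q : ℝ × Sp => fderiv ℝ Φ q (0, e3 i)) (t := t) (x := x)
    (hG.differentiable (by simp) _)
  have h2 : pd i (fun y => fderiv ℝ Φ (t, y) (1, 0)) x
      = fderiv ℝ (fun q : ℝ × Sp => fderiv ℝ Φ q (1, 0)) (t, x) (0, e3 i) :=
    pd_slice i (hH.differentiable (by simp) _)
  have e1 : fderiv ℝ (fun q : ℝ × Sp => fderiv ℝ Φ q (0, e3 i)) (t, x)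
      = (fderiv ℝ (fderiv ℝ Φ) (t, x)).flip (0, e3 i) := by
    rw [fderiv_clm_apply hc (differentiableAt_const _)]
    simp
  have e2 : fderiv ℝ (fun q : ℝ × Sp => fderiv ℝ Φ q (1, 0)) (t, x)
      = (fderiv ℝ (fderiv ℝ Φ) (t, x)).flip ((1 : ℝ), (0 : Sp)) := by
    rw [fderiv_clm_apply hc (differentiableAt_const _)]
    simp
  have hsym : fderiv ℝ (fderiv ℝ Φ) (t, x) ((1 : ℝ), (0 : Sp)) (0, e3 i)
      = fderiv ℝ (fderiv ℝ Φ) (t, x) (0, e3 i) ((1 : ℝ), (0 : Sp)) :=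
    (hΦ.contDiffAt.isSymmSndFDerivAt (by rw [minSmoothness_of_isRCLikeNormedField]; exact WithTop.coe_le_coe.2 (le_top : (2 : ℕ∞) ≤ ⊤))) _ _
  rw [h2, e2]
  rw [e1] at h1
  simpa [ContinuousLinearMap.flip_apply, hsym] using h1

lemma pd_slice₂ {φ : ℝ → Sp → ℝ} (h : ContDiff ℝ (⊤ : ℕ∞) (fun q : ℝ × Sp => φ q.1 q.2))
    (s : ℝ) (x : Sp) (i : Fin 3) :
    pd i (φ s) x = fderiv ℝ (fun q : ℝ × Sp => φ q.1 q.2) (s, x) (0, e3 i) :=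
  pd_slice i (h.differentiable (by simp) _)

lemma hasDerivAt_slice₂ {φ : ℝ → Sp → ℝ} (h : ContDiff ℝ (⊤ : ℕ∞) (fun q : ℝ × Sp => φ q.1 q.2))
    (s : ℝ) (x : Sp) :
    HasDerivAt (fun r => φ r x) (fderiv ℝ (fun q : ℝ × Sp => φ q.1 q.2) (s, x) (1, 0)) s :=
  hasDerivAt_slice (h.differentiable (by simp) _)

lemma deriv_slice₂ {φ : ℝ → Sp → ℝ} (h : ContDiff ℝ (⊤ : ℕ∞) (fun q : ℝ × Sp => φ q.1 q.2))
    (s : ℝ) (x : Sp) :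
    deriv (fun r => φ r x) s = fderiv ℝ (fun q : ℝ × Sp => φ q.1 q.2) (s, x) (1, 0) :=
  (hasDerivAt_slice₂ h s x).deriv

lemma lemA (L c₁ c₂ : ℝ) (u : ℝ → Sp → Sp) (φ : ℝ → Sp → ℝ)
    (hu : ContDiff ℝ (⊤ : ℕ∞) (fun q : ℝ × Sp => u q.1 q.2))
    (hφ : ContDiff ℝ (⊤ : ℕ∞) (fun q : ℝ × Sp => φ q.1 q.2)) (t : ℝ) :
    HasDerivAt (fun s => ∫ x in box L,
        (c₁ * ∑ i, pd i (φ s) x ^ 2 + c₂ * ((φ s x) ^ 2 - 1) ^ 2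
          + (1:ℝ)/2 * ∑ i, (u s x i) ^ 2))
      (∫ x in box L,
        (c₁ * (2 * ∑ i, pd i (φ t) x * pd i (fun y => deriv (fun s => φ s y) t) x)
          + c₂ * (4 * ((φ t x) ^ 2 - 1) * φ t x * deriv (fun s => φ s x) t)
          + ∑ i, u t x i * deriv (fun s => u s x i) t)) t := by
  have hui : ∀ i : Fin 3, ContDiff ℝ (⊤ : ℕ∞) (fun q : ℝ × Sp => u q.1 q.2 i) :=
    fun i => contDiff_pi.1 hu i
  have hGi : ∀ i : Fin 3,
      ContDiff ℝ (⊤ : ℕ∞) (fun q : ℝ × Sp => fderiv ℝ (fun q' : ℝ × Sp => φ q'.1 q'.2) q (0, e3 i)) :=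
    fun i => (hφ.fderiv_right (m := (⊤ : ℕ∞)) le_rfl).clm_apply contDiff_const
  have hEj : ContDiff ℝ (⊤ : ℕ∞) (fun q : ℝ × Sp =>
      c₁ * ∑ i, (fderiv ℝ (fun q' : ℝ × Sp => φ q'.1 q'.2) q (0, e3 i)) ^ 2
        + c₂ * ((φ q.1 q.2) ^ 2 - 1) ^ 2 + (1:ℝ)/2 * ∑ i, (u q.1 q.2 i) ^ 2) := by
    refine ContDiff.add (ContDiff.add ?_ ?_) ?_
    · exact contDiff_const.mul (ContDiff.sum fun i _ => (hGi i).pow 2)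
    · exact contDiff_const.mul (((hφ.pow 2).sub contDiff_const).pow 2)
    · exact contDiff_const.mul (ContDiff.sum fun i _ => (hui i).pow 2)
  have hfun : (fun s => ∫ x in box L,
      (c₁ * ∑ i, pd i (φ s) x ^ 2 + c₂ * ((φ s x) ^ 2 - 1) ^ 2
        + (1:ℝ)/2 * ∑ i, (u s x i) ^ 2)) = fun s => ∫ x in box L,
      (c₁ * ∑ i, (fderiv ℝ (fun q' : ℝ × Sp => φ q'.1 q'.2) (s, x) (0, e3 i)) ^ 2
        + c₂ * ((φ s x) ^ 2 - 1) ^ 2 + (1:ℝ)/2 * ∑ i, (u s x i) ^ 2) := by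
    funext s
    refine setIntegral_congr_fun (measurableSet_box L) fun x _ => ?_
    simp only [Fin.sum_univ_three]
    rw [pd_slice₂ hφ s x 0, pd_slice₂ hφ s x 1, pd_slice₂ hφ s x 2]
  have key := hasDerivAt_integral_box L _ hEj t
  rw [hfun]
  have hval : (∫ x in box L, fderiv ℝ (fun q : ℝ × Sp =>
      c₁ * ∑ i, (fderiv ℝ (fun q' : ℝ × Sp => φ q'.1 q'.2) q (0, e3 i)) ^ 2
        + c₂ * ((φ q.1 q.2) ^ 2 - 1) ^ 2 + (1:ℝ)/2 * ∑ i, (u q.1 q.2 i) ^ 2) (t, x) (1, 0))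
      = ∫ x in box L,
        (c₁ * (2 * ∑ i, pd i (φ t) x * pd i (fun y => deriv (fun s => φ s y) t) x)
          + c₂ * (4 * ((φ t x) ^ 2 - 1) * φ t x * deriv (fun s => φ s x) t)
          + ∑ i, u t x i * deriv (fun s => u s x i) t) := by
    refine setIntegral_congr_fun (measurableSet_box L) fun x _ => ?_
    have hφs : HasDerivAt (fun s => φ s x) (deriv (fun s => φ s x) t) t :=
      (hasDerivAt_slice₂ hφ t x).differentiableAt.hasDerivAt
    have hus : ∀ i : Fin 3, HasDerivAt (fun s => u s x i) (deriv (fun s => u s x i) t) t :=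
      fun i => (hasDerivAt_slice₂ (φ := fun s y => u s y i) (hui i) t x).differentiableAt.hasDerivAt
    have hpdφ : ∀ i : Fin 3, HasDerivAt
        (fun s => fderiv ℝ (fun q' : ℝ × Sp => φ q'.1 q'.2) (s, x) (0, e3 i))
        (pd i (fun y => deriv (fun s => φ s y) t) x) t := by
      intro i
      have h := hasDerivAt_pd_slice (fun q' : ℝ × Sp => φ q'.1 q'.2) hφ t x i
      have heq : (fun y => fderiv ℝ (fun q' : ℝ × Sp => φ q'.1 q'.2) (t, y) (1, 0))
          = fun y => deriv (fun s => φ s y) t :=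
        funext fun y => (deriv_slice₂ hφ t y).symm
      rwa [heq] at h
    have hb1 := (HasDerivAt.sum (fun i (_ : i ∈ Finset.univ) => (hpdφ i).pow 2)).const_mul c₁
    have hb2 := (((hφs.pow 2).sub_const 1).pow 2).const_mul c₂
    have hb3 := (HasDerivAt.sum (fun i (_ : i ∈ Finset.univ) => (hus i).pow 2)).const_mul ((1:ℝ)/2)
    have hbuilt := (hb1.add hb2).add hb3
    have huniq := (hasDerivAt_slice (hEj.differentiable (by simp) (t, x))).unique hbuilt
    rw [huniq]
    simp only [Fin.sum_univ_three, Pi.pow_apply]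
    rw [← pd_slice₂ hφ t x 0, ← pd_slice₂ hφ t x 1, ← pd_slice₂ hφ t x 2]
    push_cast
    ring
  rw [hval] at key
  exact key

theorem chns_energy_identity
    (ν γ Λ ξ L : ℝ) (hν : 0 < ν) (hγ : 0 < γ) (hΛ : 0 < Λ) (hξ : 0 < ξ) (hL : 0 < L)
    (u : ℝ → Sp → Sp) (φ : ℝ → Sp → ℝ) (p : ℝ → Sp → ℝ) (f : Sp → Sp)
    (μ : ℝ → Sp → ℝ)
    (hu_smooth : ContDiff ℝ (⊤ : ℕ∞) (fun q : ℝ × Sp => u q.1 q.2))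
    (hφ_smooth : ContDiff ℝ (⊤ : ℕ∞) (fun q : ℝ × Sp => φ q.1 q.2))
    (hp_smooth : ContDiff ℝ (⊤ : ℕ∞) (fun q : ℝ × Sp => p q.1 q.2))
    (hu_per : ∀ t, Per L (u t))
    (hφ_per : ∀ t, Per L (φ t))
    (hp_per : ∀ t, Per L (p t))
    (hdiv : ∀ t x, div3 (u t) x = 0)
    (hf_smooth : ContDiff ℝ (⊤ : ℕ∞) f)
    (hf_per : Per L f)
    (hμ : ∀ t x, μ t x = Λ * (-(lap3 (φ t) x) + (ξ⁻¹) ^ 2 * ((φ t x) ^ 3 - φ t x)))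
    (hCH : ∀ t x, deriv (fun s => φ s x) t + advect (u t) (φ t) x = γ * lap3 (μ t) x)
    (hNS : ∀ t x, ∀ i : Fin 3,
      deriv (fun s => u s x i) t + advect (u t) (fun y => u t y i) x
        = ν * lap3 (fun y => u t y i) x - φ t x * pd i (μ t) x - pd i (p t) x + f x i) :
    let E : ℝ → ℝ := fun t => ∫ x in box L,
      (Λ / 2 * (∑ i, pd i (φ t) x ^ 2) + Λ / (4 * ξ ^ 2) * ((φ t x) ^ 2 - 1) ^ 2
        + (1:ℝ) / 2 * ∑ i, (u t x i) ^ 2)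
    (∀ t, HasDerivAt E
      (-(∫ x in box L,
          (ν * (∑ i, ∑ j, pd j (fun y => u t y i) x ^ 2) + γ * ∑ i, pd i (μ t) x ^ 2))
        + ∫ x in box L, ∑ i, u t x i * f x i) t)
    ∧ ((∀ x, f x = 0) → Antitone E) := by
  intro E
  have hui : ∀ i : Fin 3, ContDiff ℝ (⊤ : ℕ∞) (fun q : ℝ × Sp => u q.1 q.2 i) :=
    fun i => contDiff_pi.1 hu_smooth i
  have hmain : ∀ t, HasDerivAt E
      (-(∫ x in box L,
          (ν * (∑ i, ∑ j, pd j (fun y => u t y i) x ^ 2) + γ * ∑ i, pd i (μ t) x ^ 2))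
        + ∫ x in box L, ∑ i, u t x i * f x i) t := by
    intro t
    -- spatial smoothness
    have hsφ : ContDiff ℝ (⊤ : ℕ∞) (φ t) :=
      hφ_smooth.comp ((contDiff_const (c := t)).prodMk contDiff_id)
    have hsu : ∀ i : Fin 3, ContDiff ℝ (⊤ : ℕ∞) (fun y => u t y i) :=
      fun i => (hui i).comp ((contDiff_const (c := t)).prodMk contDiff_id)
    have hsp : ContDiff ℝ (⊤ : ℕ∞) (p t) :=
      hp_smooth.comp ((contDiff_const (c := t)).prodMk contDiff_id)
    have hμeq : μ t = fun x => Λ * (-(∑ i, pd i (pd i (φ t)) x)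
        + (ξ⁻¹) ^ 2 * ((φ t x) ^ 3 - φ t x)) := by
      funext x; rw [hμ t x]; rfl
    have hsμ : ContDiff ℝ (⊤ : ℕ∞) (μ t) := by
      rw [hμeq]
      exact contDiff_const.mul
        (((ContDiff.sum fun i _ => contDiff_pd (contDiff_pd hsφ i) i).neg).add
          (contDiff_const.mul ((hsφ.pow 3).sub hsφ)))
    have hsaT : ContDiff ℝ (⊤ : ℕ∞) (fun y => deriv (fun s => φ s y) t) := by
      have heq : (fun y => deriv (fun s => φ s y) t)
          = fun y => fderiv ℝ (fun q : ℝ × Sp => φ q.1 q.2) (t, y) (1, 0) :=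
        funext fun y => deriv_slice₂ hφ_smooth t y
      rw [heq]
      exact ((hφ_smooth.fderiv_right (m := (⊤ : ℕ∞)) le_rfl).clm_apply contDiff_const).comp
        ((contDiff_const (c := t)).prodMk contDiff_id)
    -- differentiability shortcuts
    have hdφ : Differentiable ℝ (φ t) := hsφ.differentiable (by simp)
    have hdμ : Differentiable ℝ (μ t) := hsμ.differentiable (by simp)
    have hdp : Differentiable ℝ (p t) := hsp.differentiable (by simp)
    have hdaT : Differentiable ℝ (fun y => deriv (fun s => φ s y) t) := hsaT.differentiable (by simp)
    have hdu : ∀ i : Fin 3, Differentiable ℝ (fun y => u t y i) :=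
      fun i => (hsu i).differentiable (by simp)
    have hdDφ : ∀ j, Differentiable ℝ (pd j (φ t)) :=
      fun j => (contDiff_pd hsφ j).differentiable (by simp)
    have hdDμ : ∀ j, Differentiable ℝ (pd j (μ t)) :=
      fun j => (contDiff_pd hsμ j).differentiable (by simp)
    have hdDu : ∀ (i : Fin 3) j, Differentiable ℝ (pd j (fun y => u t y i)) :=
      fun i j => (contDiff_pd (hsu i) j).differentiable (by simp)
    -- periodicity
    have hPφ : Per L (φ t) := hφ_per t
    have hPu : ∀ i : Fin 3, Per L (fun y => u t y i) := fun i x k => congrFun (hu_per t x k) i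
    have hPp : Per L (p t) := hp_per t
    have hPDφ : ∀ j, Per L (pd j (φ t)) := fun j => Per.pd hdφ hPφ j
    have hPDu : ∀ (i : Fin 3) j, Per L (pd j (fun y => u t y i)) :=
      fun i j => Per.pd (hdu i) (hPu i) j
    have hPDDφ : ∀ i, Per L (pd i (pd i (φ t))) := fun i => Per.pd (hdDφ i) (hPDφ i) i
    have hPμ : Per L (μ t) := by
      intro x k
      rw [hμeq]
      beta_reduce
      simp only [Fin.sum_univ_three]
      rw [hPφ x k, hPDDφ 0 x k, hPDDφ 1 x k, hPDDφ 2 x k]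
    have hPDμ : ∀ j, Per L (pd j (μ t)) := fun j => Per.pd hdμ hPμ j
    have hPaT : ∀ (x : Sp) (k : Fin 3),
        deriv (fun s => φ s (x + L • e3 k)) t = deriv (fun s => φ s x) t := by
      intro x k
      congr 1
      funext s
      exact hφ_per s x k
    have hPu' : ∀ (x : Sp) (k : Fin 3), u t (x + L • e3 k) = u t x := hu_per t
    -- the flux fields
    set W : Fin 3 → Sp → ℝ := fun j y =>
      Λ * (deriv (fun s => φ s y) t * pd j (φ t) y) + γ * (μ t y * pd j (μ t) y)
        + ν * (u t y 0 * pd j (fun z => u t z 0) y + u t y 1 * pd j (fun z => u t z 1) y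
          + u t y 2 * pd j (fun z => u t z 2) y)
        - u t y j * (1/2 * (u t y 0 * u t y 0 + u t y 1 * u t y 1 + u t y 2 * u t y 2)
          + μ t y * φ t y + p t y) with hWdef
    have hWs : ∀ j, ContDiff ℝ (⊤ : ℕ∞) (W j) := by
      intro j
      rw [hWdef]
      exact ((((contDiff_const.mul (hsaT.mul (contDiff_pd hsφ j))).add
        (contDiff_const.mul (hsμ.mul (contDiff_pd hsμ j)))).add
        (contDiff_const.mul ((((hsu 0).mul (contDiff_pd (hsu 0) j)).add
          ((hsu 1).mul (contDiff_pd (hsu 1) j))).add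
          ((hsu 2).mul (contDiff_pd (hsu 2) j))))).sub
        ((hsu j).mul (((contDiff_const.mul ((((hsu 0).mul (hsu 0)).add
          ((hsu 1).mul (hsu 1))).add ((hsu 2).mul (hsu 2)))).add
          (hsμ.mul hsφ)).add hsp)))
    have hPW : ∀ j, Per L (W j) := by
      intro j x k
      rw [hWdef]
      beta_reduce
      rw [hPaT x k, hPφ x k, hPμ x k, hPp x k, hPDφ j x k, hPDμ j x k, hPu' x k,
        hPDu 0 j x k, hPDu 1 j x k, hPDu 2 j x k]
    -- the derivative from lemA
    have hA := lemA L (Λ / 2) (Λ / (4 * ξ ^ 2)) u φ hu_smooth hφ_smooth t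
    -- integrability
    have hcA : Continuous (fun x => ν * (∑ i, ∑ j, pd j (fun y => u t y i) x ^ 2)
        + γ * ∑ i, pd i (μ t) x ^ 2) :=
      (continuous_const.mul (continuous_finset_sum _ fun i _ =>
        continuous_finset_sum _ fun j _ => ((contDiff_pd (hsu i) j).continuous.pow 2))).add
        (continuous_const.mul (continuous_finset_sum _ fun i _ =>
          ((contDiff_pd hsμ i).continuous.pow 2)))
    have hcB : Continuous (fun x => ∑ i, u t x i * f x i) :=
      continuous_finset_sum _ fun i _ =>
        ((hsu i).continuous.mul ((continuous_apply i).comp hf_smooth.continuous))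
    have hcS : Continuous (fun x => ∑ j, pd j (W j) x) :=
      continuous_finset_sum _ fun j _ => (contDiff_pd (hWs j) j).continuous
    have hiNA : IntegrableOn (fun x => -(ν * (∑ i, ∑ j, pd j (fun y => u t y i) x ^ 2)
        + γ * ∑ i, pd i (μ t) x ^ 2)) (box L) volume :=
      hcA.neg.continuousOn.integrableOn_compact (isCompact_box L)
    have hiB : IntegrableOn (fun x => ∑ i, u t x i * f x i) (box L) volume :=
      hcB.continuousOn.integrableOn_compact (isCompact_box L)
    have hiS : IntegrableOn (fun x => ∑ j, pd j (W j) x) (box L) volume :=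
      hcS.continuousOn.integrableOn_compact (isCompact_box L)
    have hiNAB : IntegrableOn (fun x => -(ν * (∑ i, ∑ j, pd j (fun y => u t y i) x ^ 2)
        + γ * ∑ i, pd i (μ t) x ^ 2) + ∑ i, u t x i * f x i) (box L) volume :=
      (hcA.neg.add hcB).continuousOn.integrableOn_compact (isCompact_box L)
    have hSzero : (∫ x in box L, ∑ j, pd j (W j) x) = 0 := by
      rw [integral_finset_sum _ (fun j _ =>
        ((contDiff_pd (hWs j) j).continuous.continuousOn.integrableOn_compact
          (isCompact_box L)))]
      exact Finset.sum_eq_zero fun j _ => integral_pd_eq_zero hL (hWs j) (hPW j) j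
    -- the pointwise identity
    have h₁ : ∀ x ∈ box L,
        (Λ / 2 * (2 * ∑ i, pd i (φ t) x * pd i (fun y => deriv (fun s => φ s y) t) x)
          + Λ / (4 * ξ ^ 2) * (4 * ((φ t x) ^ 2 - 1) * φ t x * deriv (fun s => φ s x) t)
          + ∑ i, u t x i * deriv (fun s => u s x i) t)
        = ((-(ν * (∑ i, ∑ j, pd j (fun y => u t y i) x ^ 2) + γ * ∑ i, pd i (μ t) x ^ 2)
            + ∑ i, u t x i * f x i) + ∑ j, pd j (W j) x) := by
      intro x _
      have hW3 : ∀ j, pd j (W j) x =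
          Λ * (pd j (fun y => deriv (fun s => φ s y) t) x * pd j (φ t) x
            + deriv (fun s => φ s x) t * pd j (pd j (φ t)) x)
          + γ * (pd j (μ t) x * pd j (μ t) x + μ t x * pd j (pd j (μ t)) x)
          + ν * (pd j (fun y => u t y 0) x * pd j (fun y => u t y 0) x
              + u t x 0 * pd j (pd j (fun y => u t y 0)) x
            + (pd j (fun y => u t y 1) x * pd j (fun y => u t y 1) x
              + u t x 1 * pd j (pd j (fun y => u t y 1)) x)
            + (pd j (fun y => u t y 2) x * pd j (fun y => u t y 2) x
              + u t x 2 * pd j (pd j (fun y => u t y 2)) x))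
          - (pd j (fun y => u t y j) x
              * (1/2 * (u t x 0 * u t x 0 + u t x 1 * u t x 1 + u t x 2 * u t x 2)
                + μ t x * φ t x + p t x)
            + u t x j * (1/2 * (pd j (fun y => u t y 0) x * u t x 0
                + u t x 0 * pd j (fun y => u t y 0) x
                + (pd j (fun y => u t y 1) x * u t x 1 + u t x 1 * pd j (fun y => u t y 1) x)
                + (pd j (fun y => u t y 2) x * u t x 2 + u t x 2 * pd j (fun y => u t y 2) x))
              + (pd j (μ t) x * φ t x + μ t x * pd j (φ t) x) + pd j (p t) x)) := by
        intro j
        have hT1in : DifferentiableAt ℝ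
            (fun y => deriv (fun s => φ s y) t * pd j (φ t) y) x := (hdaT x).mul (hdDφ j x)
        have hT1 := hT1in.const_mul Λ
        have hT2in : DifferentiableAt ℝ (fun y => μ t y * pd j (μ t) y) x :=
          (hdμ x).mul (hdDμ j x)
        have hT2 := hT2in.const_mul γ
        have hT3a : DifferentiableAt ℝ (fun y => u t y 0 * pd j (fun z => u t z 0) y) x :=
          (hdu 0 x).mul (hdDu 0 j x)
        have hT3b : DifferentiableAt ℝ (fun y => u t y 1 * pd j (fun z => u t z 1) y) x :=
          (hdu 1 x).mul (hdDu 1 j x)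
        have hT3c : DifferentiableAt ℝ (fun y => u t y 2 * pd j (fun z => u t z 2) y) x :=
          (hdu 2 x).mul (hdDu 2 j x)
        have hT3in := (hT3a.fun_add hT3b).fun_add hT3c
        have hT3 := hT3in.const_mul ν
        have hsq1 : DifferentiableAt ℝ (fun y => u t y 0 * u t y 0) x := (hdu 0 x).mul (hdu 0 x)
        have hsq2 : DifferentiableAt ℝ (fun y => u t y 1 * u t y 1) x := (hdu 1 x).mul (hdu 1 x)
        have hsq3 : DifferentiableAt ℝ (fun y => u t y 2 * u t y 2) x := (hdu 2 x).mul (hdu 2 x)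
        have hQ1in := (hsq1.fun_add hsq2).fun_add hsq3
        have hQ1 := hQ1in.const_mul (1/2 : ℝ)
        have hQ2 : DifferentiableAt ℝ (fun y => μ t y * φ t y) x := (hdμ x).mul (hdφ x)
        have hQ12 := hQ1.fun_add hQ2
        have hQ := hQ12.fun_add (hdp x)
        have hB : DifferentiableAt ℝ (fun y => u t y j
            * (1/2 * (u t y 0 * u t y 0 + u t y 1 * u t y 1 + u t y 2 * u t y 2)
              + μ t y * φ t y + p t y)) x := (hdu j x).mul hQ
        rw [hWdef]
        beta_reduce
        rw [pd_sub j ((hT1.fun_add hT2).fun_add hT3) hB]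
        rw [pd_add j (hT1.fun_add hT2) hT3]
        rw [pd_add j hT1 hT2]
        rw [pd_const_mul j Λ hT1in]
        rw [pd_mul j (hdaT x) (hdDφ j x)]
        rw [pd_const_mul j γ hT2in]
        rw [pd_mul j (hdμ x) (hdDμ j x)]
        rw [pd_const_mul j ν hT3in]
        rw [pd_add j (hT3a.fun_add hT3b) hT3c]
        rw [pd_add j hT3a hT3b]
        rw [pd_mul j (hdu 0 x) (hdDu 0 j x)]
        rw [pd_mul j (hdu 1 x) (hdDu 1 j x)]
        rw [pd_mul j (hdu 2 x) (hdDu 2 j x)]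
        rw [pd_mul j (hdu j x) hQ]
        rw [pd_add j hQ12 (hdp x)]
        rw [pd_add j hQ1 hQ2]
        rw [pd_const_mul j (1/2 : ℝ) hQ1in]
        rw [pd_add j (hsq1.fun_add hsq2) hsq3]
        rw [pd_add j hsq1 hsq2]
        rw [pd_mul j (hdu 0 x) (hdu 0 x)]
        rw [pd_mul j (hdu 1 x) (hdu 1 x)]
        rw [pd_mul j (hdu 2 x) (hdu 2 x)]
        rw [pd_mul j (hdμ x) (hdφ x)]
      have hCHx : deriv (fun s => φ s x) t
          = γ * (pd 0 (pd 0 (μ t)) x + pd 1 (pd 1 (μ t)) x + pd 2 (pd 2 (μ t)) x)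
            - (u t x 0 * pd 0 (φ t) x + u t x 1 * pd 1 (φ t) x + u t x 2 * pd 2 (φ t) x) := by
        have h := hCH t x
        simp only [lap3, advect, Fin.sum_univ_three] at h
        linarith
      have hNSx : ∀ i : Fin 3, deriv (fun s => u s x i) t
          = ν * (pd 0 (pd 0 (fun y => u t y i)) x + pd 1 (pd 1 (fun y => u t y i)) x
              + pd 2 (pd 2 (fun y => u t y i)) x)
            - (u t x 0 * pd 0 (fun y => u t y i) x + u t x 1 * pd 1 (fun y => u t y i) x
              + u t x 2 * pd 2 (fun y => u t y i) x)
            - φ t x * pd i (μ t) x - pd i (p t) x + f x i := by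
        intro i
        have h := hNS t x i
        simp only [lap3, advect, Fin.sum_univ_three] at h
        linarith
      have hμx : μ t x = Λ * (-(pd 0 (pd 0 (φ t)) x + pd 1 (pd 1 (φ t)) x + pd 2 (pd 2 (φ t)) x)
          + (ξ⁻¹) ^ 2 * ((φ t x) ^ 3 - φ t x)) := by
        have h := hμ t x
        simpa only [lap3, Fin.sum_univ_three] using h
      have hdivx : pd 0 (fun y => u t y 0) x + pd 1 (fun y => u t y 1) x
          + pd 2 (fun y => u t y 2) x = 0 := by
        have h := hdiv t x
        simpa only [div3, Fin.sum_univ_three] using h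
      simp only [Fin.sum_univ_three]
      rw [hW3 0, hW3 1, hW3 2]
      linear_combination u t x 0 * hNSx 0 + u t x 1 * hNSx 1 + u t x 2 * hNSx 2
        + μ t x * hCHx - deriv (fun s => φ s x) t * hμx
        + (1/2 * (u t x 0 * u t x 0 + u t x 1 * u t x 1 + u t x 2 * u t x 2)
            + μ t x * φ t x + p t x) * hdivx
    have hfinal : (∫ x in box L,
        (Λ / 2 * (2 * ∑ i, pd i (φ t) x * pd i (fun y => deriv (fun s => φ s y) t) x)
          + Λ / (4 * ξ ^ 2) * (4 * ((φ t x) ^ 2 - 1) * φ t x * deriv (fun s => φ s x) t)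
          + ∑ i, u t x i * deriv (fun s => u s x i) t))
        = -(∫ x in box L, (ν * (∑ i, ∑ j, pd j (fun y => u t y i) x ^ 2)
            + γ * ∑ i, pd i (μ t) x ^ 2)) + ∫ x in box L, ∑ i, u t x i * f x i := by
      rw [setIntegral_congr_fun (measurableSet_box L) h₁]
      rw [integral_add hiNAB hiS]
      rw [integral_add hiNA hiB]
      rw [integral_neg, hSzero, add_zero]
    rw [← hfinal]
    exact hA
  refine ⟨hmain, fun hf0 => ?_⟩
  have hdiffE : Differentiable ℝ E := fun s => (hmain s).differentiableAt
  refine antitone_of_deriv_nonpos hdiffE fun s => ?_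
  rw [(hmain s).deriv]
  have h2 : (∫ x in box L, ∑ i, u s x i * f x i) = 0 := by
    have hz : ∀ x : Sp, (∑ i, u s x i * f x i) = 0 := fun x => by simp [hf0 x]
    simp [hz]
  rw [h2, add_zero]
  refine neg_nonpos.2 (setIntegral_nonneg (measurableSet_box L) fun x _ => ?_)
  have hsq1 : (0:ℝ) ≤ ∑ i, ∑ j, pd j (fun y => u s y i) x ^ 2 := by positivity
  have hsq2 : (0:ℝ) ≤ ∑ i, pd i (μ s) x ^ 2 := by positivity
  exact add_nonneg (mul_nonneg hν.le hsq1) (mul_nonneg hγ.le hsq2)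
end
end

section
/- Let T > 0, K ≥ 0, let a : [0,T] → ℝ be continuous and nonnegative, and let H : [0,T] → ℝ be differentiable and nonnegative with H′(t) ≤ a(t) H(t) + K √(H(t)) for all t ∈ [0,T]. Then for all t ∈ [0,T]: H(t) ≤ exp( ∫₀ᵗ a(s) ds ) · ( √(H(0)) + (K/2) t )². -/
open MeasureTheory Set

noncomputable section

/-!
A barrier argument. Writing `A` for a primitive of `a`, the functions
`B x = exp (A x) * (c + k / 2 * x) ^ 2` with `c > 0`, `c ^ 2 ≥ H 0` and `k > K` satisfy
`H 0 ≤ B 0`, and at a touching point `H x = B x` we get `√(H x) = exp (A x / 2) * (c + k / 2 * x)`,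
so that `K * √(H x) < k * exp (A x) * (c + k / 2 * x)` as soon as `A x ≥ 0`; hence `H' x < B' x`,
and the fencing theorem gives `H ≤ B`. Letting `c → √(H 0)` and `k → K` gives the bound.
-/

open Real Filter Topology

theorem sqrt_exp_mul_sq {A P : ℝ} (hP : 0 ≤ P) : √(exp A * P ^ 2) = exp (A / 2) * P := by
  rw [← sqrt_sq (by positivity : 0 ≤ exp (A / 2) * P), mul_pow, ← exp_nat_mul]
  congr 3
  ring

theorem hasDerivAt_exp_mul_affine_sq {A α : ℝ → ℝ} {x : ℝ} (hA : HasDerivAt A (α x) x)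
    (c k : ℝ) :
    HasDerivAt (fun y => exp (A y) * (c + k / 2 * y) ^ 2)
      (α x * exp (A x) * (c + k / 2 * x) ^ 2 + exp (A x) * (k * (c + k / 2 * x))) x := by
  have hP : HasDerivAt (fun y => c + k / 2 * y) (k / 2) x := by
    simpa using ((hasDerivAt_id x).const_mul (k / 2)).const_add c
  exact (hA.exp.mul (hP.fun_pow 2)).congr_deriv (by push_cast; ring)

section Barrier

variable {T K : ℝ} {A α H H' : ℝ → ℝ}

theorem le_exp_mul_affine_sq_of_deriv_le_mul_add_sqrt {k c : ℝ} (hK : 0 ≤ K) (hKk : K < k)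
    (hc : 0 < c) (hH0 : H 0 ≤ c ^ 2) (hA : ∀ x, HasDerivAt A (α x) x) (hA0 : A 0 = 0)
    (hA_nonneg : ∀ x ∈ Ico 0 T, 0 ≤ A x) (hH : ContinuousOn H (Icc 0 T))
    (hH' : ∀ x ∈ Ico 0 T, HasDerivWithinAt H (H' x) (Ici x) x)
    (hineq : ∀ x ∈ Ico 0 T, H' x ≤ α x * H x + K * √(H x)) :
    ∀ x ∈ Icc 0 T, H x ≤ exp (A x) * (c + k / 2 * x) ^ 2 := by
  refine image_le_of_deriv_right_lt_deriv_boundary hH hH' (by simpa [hA0] using hH0)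
    (fun x => hasDerivAt_exp_mul_affine_sq (hA x) c k) ?_
  intro x hx hHx
  have hP : 0 < c + k / 2 * x := by nlinarith [hx.1]
  have hE : exp (A x / 2) ≤ exp (A x) := exp_le_exp.2 (by linarith [hA_nonneg x hx])
  have hforcing : K * √(H x) < exp (A x) * (k * (c + k / 2 * x)) := by
    rw [hHx, sqrt_exp_mul_sq hP.le]
    calc K * (exp (A x / 2) * (c + k / 2 * x))
        ≤ K * (exp (A x) * (c + k / 2 * x)) := by gcongr
      _ < k * (exp (A x) * (c + k / 2 * x)) := by gcongr
      _ = exp (A x) * (k * (c + k / 2 * x)) := by ring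
  calc H' x ≤ α x * H x + K * √(H x) := hineq x hx
    _ < α x * H x + exp (A x) * (k * (c + k / 2 * x)) := by linarith
    _ = _ := by rw [hHx]; ring

theorem le_exp_mul_sqrt_add_sq_of_deriv_le_mul_add_sqrt (hK : 0 ≤ K) (hH0 : 0 ≤ H 0)
    (hA : ∀ x, HasDerivAt A (α x) x) (hA0 : A 0 = 0) (hA_nonneg : ∀ x ∈ Ico 0 T, 0 ≤ A x)
    (hH : ContinuousOn H (Icc 0 T)) (hH' : ∀ x ∈ Ico 0 T, HasDerivWithinAt H (H' x) (Ici x) x)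
    (hineq : ∀ x ∈ Ico 0 T, H' x ≤ α x * H x + K * √(H x)) :
    ∀ x ∈ Icc 0 T, H x ≤ exp (A x) * (√(H 0) + K / 2 * x) ^ 2 := by
  intro x hx
  have hbarrier : Continuous fun ε => exp (A x) * (√(H 0 + ε) + (K + ε) / 2 * x) ^ 2 := by
    fun_prop
  refine ge_of_tendsto
    (by simpa using (hbarrier.tendsto 0).mono_left (nhdsWithin_le_nhds (s := Ioi 0))) ?_
  filter_upwards [self_mem_nhdsWithin] with ε (hε : 0 < ε)
  exact le_exp_mul_affine_sq_of_deriv_le_mul_add_sqrt hK (by linarith) (by positivity)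
    (by rw [sq_sqrt (by positivity)]; linarith) hA hA0 hA_nonneg hH hH' hineq x hx

end Barrier

theorem gronwall_with_sqrt_forcing_general
    (T K : ℝ) (hK : 0 ≤ K)
    (a H H' : ℝ → ℝ)
    (ha_cont : ContinuousOn a (Icc 0 T))
    (ha_nonneg : ∀ t ∈ Icc (0:ℝ) T, 0 ≤ a t)
    (hH_nonneg : ∀ t ∈ Icc (0:ℝ) T, 0 ≤ H t)
    (hH_deriv : ∀ t ∈ Icc (0:ℝ) T, HasDerivAt H (H' t) t)
    (hineq : ∀ t ∈ Icc (0:ℝ) T, H' t ≤ a t * H t + K * Real.sqrt (H t)) :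
    ∀ t ∈ Icc (0:ℝ) T,
      H t ≤ Real.exp (∫ s in (0:ℝ)..t, a s) * (Real.sqrt (H 0) + K / 2 * t) ^ 2 := by
  intro t ht
  have hT : (0 : ℝ) ≤ T := ht.1.trans ht.2
  -- A continuous extension of `a` to `ℝ`, so that `∫ s in 0..x, b s` is a primitive.
  set b : ℝ → ℝ := fun s => a (projIcc 0 T hT s)
  have hb : Continuous b := ha_cont.comp_continuous
    (continuous_subtype_val.comp continuous_projIcc) fun s => (projIcc 0 T hT s).2
  have hb_eq : EqOn b a (Icc 0 T) := fun s hs => by simp [b, projIcc_of_mem hT hs]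
  have hb_nonneg : ∀ s, 0 ≤ b s := fun s => ha_nonneg _ (projIcc 0 T hT s).2
  have hbound := le_exp_mul_sqrt_add_sq_of_deriv_le_mul_add_sqrt hK
    (hH_nonneg 0 ⟨le_rfl, hT⟩) (fun x => hb.integral_hasStrictDerivAt 0 x |>.hasDerivAt)
    intervalIntegral.integral_same
    (fun x hx => intervalIntegral.integral_nonneg hx.1 fun s _ => hb_nonneg s)
    (fun x hx => (hH_deriv x hx).continuousAt.continuousWithinAt)
    (fun x hx => (hH_deriv x (Ico_subset_Icc_self hx)).hasDerivWithinAt)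
    (fun x hx => hb_eq (Ico_subset_Icc_self hx) ▸ hineq x (Ico_subset_Icc_self hx)) t ht
  rwa [intervalIntegral.integral_congr fun s hs =>
    hb_eq (Icc_subset_Icc_right ht.2 (uIcc_of_le ht.1 ▸ hs))] at hbound

theorem gronwall_with_sqrt_forcing
    (T K : ℝ) (hT : 0 < T) (hK : 0 ≤ K)
    (a H H' : ℝ → ℝ)
    (ha_cont : ContinuousOn a (Icc 0 T))
    (ha_nonneg : ∀ t ∈ Icc (0:ℝ) T, 0 ≤ a t)
    (hH_nonneg : ∀ t ∈ Icc (0:ℝ) T, 0 ≤ H t)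
    (hH_deriv : ∀ t ∈ Icc (0:ℝ) T, HasDerivAt H (H' t) t)
    (hineq : ∀ t ∈ Icc (0:ℝ) T, H' t ≤ a t * H t + K * Real.sqrt (H t)) :
    ∀ t ∈ Icc (0:ℝ) T,
      H t ≤ Real.exp (∫ s in (0:ℝ)..t, a s) * (Real.sqrt (H 0) + K / 2 * t) ^ 2 :=
  gronwall_with_sqrt_forcing_general T K hK a H H' ha_cont ha_nonneg hH_nonneg hH_deriv hineq
end
end
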